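/- There exists a constant C > 0 such that for every integer l ≥ 16, τ(K_{2,l}) - χ_ℓ(K_{2,l}) = τ(K_{2,l}) - 3 ≥ C·√l. -/

import Mathlib

/-- A proper coloring of the graph `G` from the list assignment `L` (colors are
natural numbers): every vertex gets a color from its list, and adjacent vertices
get different colors. -/
def IsProperListColoring {V : Type*} (G : SimpleGraph V) (L : V → Finset ℕ) (f : V → ℕ) : Prop :=
  (∀ v, f v ∈ L v) ∧ ∀ ⦃u w⦄, G.Adj u w → f u ≠ f w

/-- `P(G, L)`: the number of proper `L`-colorings of `G`. -/
noncomputable def numListColorings {V : Type*} (G : SimpleGraph V) (L : V → Finset ℕ) : ℕ :=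
  {f : V → ℕ | IsProperListColoring G L f}.ncard

/-- `P(G, m)`: the chromatic polynomial of `G` evaluated at `m`, i.e. the number of
proper colorings of `G` using colors from `{1, …, m}`. -/
noncomputable def chromPoly {V : Type*} (G : SimpleGraph V) (m : ℕ) : ℕ :=
  numListColorings G fun _ => Finset.Icc 1 m

/-- `L` is an `m`-assignment: every list has size `m`. -/
def IsAssignment {V : Type*} (L : V → Finset ℕ) (m : ℕ) : Prop :=
  ∀ v, (L v).card = m

/-- `P_ℓ(G, m)`: the list color function, the minimum of `P(G, L)` over all
`m`-assignments `L` for `G`. -/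
noncomputable def listColorFunction {V : Type*} (G : SimpleGraph V) (m : ℕ) : ℕ :=
  sInf {p | ∃ L : V → Finset ℕ, IsAssignment L m ∧ numListColorings G L = p}

/-- `χ(G)`: the chromatic number, the least `m` admitting a proper coloring with
colors from `{1, …, m}`. -/
noncomputable def chromNum {V : Type*} (G : SimpleGraph V) : ℕ :=
  sInf {m | 0 < chromPoly G m}

/-- `χ_ℓ(G)`: the list chromatic number, the least `k` such that `G` has a proper
`L`-coloring for every `k`-assignment `L`. -/
noncomputable def listChromNum {V : Type*} (G : SimpleGraph V) : ℕ :=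
  sInf {k | ∀ L : V → Finset ℕ, IsAssignment L k → ∃ f, IsProperListColoring G L f}

/-- `τ(G)`: the list color function threshold, the least `k ≥ χ(G)` such that
`P_ℓ(G, m) = P(G, m)` whenever `m ≥ k`. -/
noncomputable def lcfThreshold {V : Type*} (G : SimpleGraph V) : ℕ :=
  sInf {k | chromNum G ≤ k ∧ ∀ m, k ≤ m → listColorFunction G m = chromPoly G m}

/-- The complete bipartite graph `K_{2,l}`. -/
def K2l (l : ℕ) : SimpleGraph (Fin 2 ⊕ Fin l) := completeBipartiteGraph (Fin 2) (Fin l)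


open Finset

def NL (l : ℕ) (L : Fin 2 ⊕ Fin l → Finset ℕ) : ℕ :=
  ∑ c ∈ L (.inl 0), ∑ d ∈ L (.inl 1), ∏ i : Fin l, (L (.inr i) \ {c, d}).card

lemma isProper_iff {l : ℕ} (L : Fin 2 ⊕ Fin l → Finset ℕ) (f : Fin 2 ⊕ Fin l → ℕ) :
    IsProperListColoring (K2l l) L f ↔
      (∀ v, f v ∈ L v) ∧ ∀ (x : Fin 2) (i : Fin l), f (.inl x) ≠ f (.inr i) := by
  constructor
  · rintro ⟨h1, h2⟩
    exact ⟨h1, fun x i => h2 (by simp [K2l])⟩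
  · rintro ⟨h1, h2⟩
    refine ⟨h1, ?_⟩
    rintro (x | i) (y | j) hadj <;> simp [K2l] at hadj
    · exact h2 x j
    · exact (h2 y i).symm

noncomputable def colEquiv {l : ℕ} (L : Fin 2 ⊕ Fin l → Finset ℕ) :
    {f : Fin 2 ⊕ Fin l → ℕ // IsProperListColoring (K2l l) L f} ≃
      (c : L (.inl 0)) × (d : L (.inl 1)) ×
        ((i : Fin l) → (L (.inr i) \ {(c : ℕ), (d : ℕ)} : Finset ℕ)) where
  toFun f := ⟨⟨f.1 (.inl 0), f.2.1 _⟩, ⟨f.1 (.inl 1), f.2.1 _⟩, fun i =>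
    ⟨f.1 (.inr i), by
      rw [Finset.mem_sdiff]
      refine ⟨f.2.1 _, ?_⟩
      have h2 := ((isProper_iff L f.1).1 f.2).2
      simp only [Finset.mem_insert, Finset.mem_singleton]
      push_neg
      exact ⟨(h2 0 i).symm, (h2 1 i).symm⟩⟩⟩
  invFun x := ⟨Sum.elim (![(x.1 : ℕ), (x.2.1 : ℕ)]) (fun i => (x.2.2 i : ℕ)), by
    rw [isProper_iff]
    constructor
    · rintro (y | j)
      · fin_cases y
        · exact x.1.2
        · exact x.2.1.2
      · have := (x.2.2 j).2
        rw [Finset.mem_sdiff] at this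
        exact this.1
    · intro y j
      have := (x.2.2 j).2
      rw [Finset.mem_sdiff] at this
      have h := this.2
      simp only [Finset.mem_insert, Finset.mem_singleton] at h
      push_neg at h
      fin_cases y
      · exact fun hc => h.1 hc.symm
      · exact fun hc => h.2 hc.symm⟩
  left_inv f := by
    apply Subtype.ext
    funext v
    rcases v with y | j
    · fin_cases y <;> rfl
    · rfl
  right_inv x := by
    rcases x with ⟨c, d, g⟩
    rfl

lemma CL {l : ℕ} (L : Fin 2 ⊕ Fin l → Finset ℕ) :
    numListColorings (K2l l) L = NL l L := by
  have h1 : numListColorings (K2l l) L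
      = Nat.card {f : Fin 2 ⊕ Fin l → ℕ // IsProperListColoring (K2l l) L f} := by
    rw [numListColorings, ← Nat.card_coe_set_eq]
    rfl
  rw [h1, Nat.card_congr (colEquiv L), Nat.card_eq_fintype_card]
  rw [Fintype.card_sigma]
  rw [NL, ← Finset.sum_coe_sort (L (.inl 0))]
  refine Finset.sum_congr rfl fun c _ => ?_
  rw [Fintype.card_sigma, ← Finset.sum_coe_sort (L (.inl 1))]
  refine Finset.sum_congr rfl fun d _ => ?_
  rw [Fintype.card_pi]
  refine Finset.prod_congr rfl fun i _ => ?_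
  exact Fintype.card_coe _


-- sdiff card helpers
lemma sd_both {s : Finset ℕ} {c d : ℕ} (hc : c ∈ s) (hd : d ∈ s) (h : c ≠ d) :
    (s \ {c, d}).card = s.card - 2 := by
  rw [card_sdiff_of_subset (by intro x hx; simp at hx; rcases hx with rfl | rfl <;> assumption)]
  rw [card_insert_of_notMem (by simp [h]), card_singleton]

lemma sd_left {s : Finset ℕ} {c d : ℕ} (hc : c ∈ s) (hd : d ∉ s) :
    (s \ {c, d}).card = s.card - 1 := by
  have : s \ {c, d} = s \ {c} := by
    ext a
    simp only [mem_sdiff, mem_insert, mem_singleton]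
    constructor
    · rintro ⟨ha, h2⟩; exact ⟨ha, fun h => h2 (Or.inl h)⟩
    · rintro ⟨ha, h2⟩
      refine ⟨ha, ?_⟩
      rintro (rfl | rfl)
      · exact h2 rfl
      · exact hd ha
  rw [this, card_sdiff_of_subset (by simpa using hc), card_singleton]

lemma sd_right {s : Finset ℕ} {c d : ℕ} (hc : c ∉ s) (hd : d ∈ s) :
    (s \ {c, d}).card = s.card - 1 := by
  have : ({c, d} : Finset ℕ) = {d, c} := by ext a; simp; tauto
  rw [this, sd_left hd hc]

lemma sd_none {s : Finset ℕ} {c d : ℕ} (hc : c ∉ s) (hd : d ∉ s) :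
    (s \ {c, d}).card = s.card := by
  rw [Finset.sdiff_eq_self_iff_disjoint.2]
  rw [Finset.disjoint_left]
  intro a ha hb
  rw [Finset.mem_insert, Finset.mem_singleton] at hb
  rcases hb with rfl | rfl <;> tauto

lemma sd_diag {s : Finset ℕ} {c : ℕ} (hc : c ∈ s) :
    (s \ {c, c}).card = s.card - 1 := by
  have : ({c, c} : Finset ℕ) = {c} := by simp
  rw [this, card_sdiff_of_subset (by simpa using hc), card_singleton]

-- diagonal/offdiagonal double sum
lemma diagsum {s : Finset ℕ} {W F : ℕ} (f : ℕ → ℕ → ℕ)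
    (hdiag : ∀ c ∈ s, f c c = W) (hoff : ∀ c ∈ s, ∀ d ∈ s, c ≠ d → f c d = F) :
    ∑ c ∈ s, ∑ d ∈ s, f c d = s.card * W + (s.card * (s.card - 1)) * F := by
  have : ∀ c ∈ s, ∑ d ∈ s, f c d = W + (s.card - 1) * F := by
    intro c hc
    rw [← Finset.add_sum_erase s _ hc, hdiag c hc]
    congr 1
    rw [Finset.sum_congr rfl (fun d hd => hoff c hc d (Finset.mem_of_mem_erase hd)
      (Ne.symm (Finset.ne_of_mem_erase hd)))]
    rw [Finset.sum_const, Finset.card_erase_of_mem hc, smul_eq_mul]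
  rw [Finset.sum_congr rfl this, Finset.sum_const, smul_eq_mul, Nat.mul_add, Nat.mul_assoc]


lemma chromPoly_K2l (l m : ℕ) :
    chromPoly (K2l l) m = m * (m-1)^l + (m*(m-1)) * (m-2)^l := by
  rw [chromPoly, CL, NL]
  have hcard : (Finset.Icc 1 m).card = m := by rw [Nat.card_Icc]; omega
  rw [diagsum (fun c d => ∏ _i : Fin l, ((Finset.Icc 1 m) \ {c, d}).card)
    (W := (m-1)^l) (F := (m-2)^l) ?_ ?_, hcard]
  · intro c hc
    rw [Finset.prod_const, sd_diag hc, hcard]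
    simp
  · intro c hc d hd hne
    rw [Finset.prod_const, sd_both hc hd hne, hcard]
    simp


-- (a+1)^(n+1) ≤ a^(n+1) + (n+1)(a+1)^n
lemma lemB (a : ℕ) : ∀ n : ℕ, (a+1)^(n+1) ≤ a^(n+1) + (n+1)*(a+1)^n := by
  intro n
  induction n with
  | zero => simpa using by omega
  | succ n ih =>
    have h1 : (a+1)^(n+2) = (a+1)^(n+1) * (a+1) := by ring
    have h2 : a^(n+1) ≤ (a+1)^(n+1) := Nat.pow_le_pow_left (by omega) _
    calc (a+1)^(n+2) = (a+1)^(n+1) * (a+1) := h1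
      _ ≤ (a^(n+1) + (n+1)*(a+1)^n) * (a+1) := Nat.mul_le_mul_right _ ih
      _ = a^(n+1)*a + a^(n+1) + (n+1)*(a+1)^(n+1) := by ring
      _ ≤ a^(n+2) + (n+2)*(a+1)^(n+1) := by
          have h4 : a^(n+1)*a = a^(n+2) := by ring
          have h5 : (n+2)*(a+1)^(n+1) = (n+1)*(a+1)^(n+1) + (a+1)^(n+1) := by ring
          omega

-- (a+1)^(n+1) ≥ a^(n+1) + (n+1)*a^n
lemma pow_succ_ge (a : ℕ) : ∀ n : ℕ, a^(n+1) + (n+1)*a^n ≤ (a+1)^(n+1) := by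
  intro n
  induction n with
  | zero => simpa using by omega
  | succ n ih =>
    have h2 : a^(n+1) ≤ (a+1)^(n+1) := Nat.pow_le_pow_left (by omega) _
    have h3 : a^(n+1) = a^n * a := by ring
    calc a^(n+2) + (n+2)*a^(n+1) = (a^(n+1) + (n+1)*a^n)*a + a^(n+1) := by ring
      _ ≤ (a+1)^(n+1)*a + (a+1)^(n+1) := by
          have := Nat.mul_le_mul_right a ih
          omega
      _ = (a+1)^(n+2) := by ring

-- lemA : 2K(a+1)^n ≤ (2K+n) a^n when 2K + n ≤ a
lemma lemA (K a : ℕ) : ∀ n : ℕ, 2*K + n ≤ a → 2*K*(a+1)^n ≤ (2*K+n)*a^n := by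
  intro n
  induction n with
  | zero => simp
  | succ n ih =>
    intro h
    have ih' := ih (by omega)
    calc 2*K*(a+1)^(n+1) = (2*K*(a+1)^n) * (a+1) := by ring
      _ ≤ ((2*K+n)*a^n) * (a+1) := Nat.mul_le_mul_right _ ih'
      _ = (2*K+n)*a^(n+1) + (2*K+n)*a^n := by ring
      _ ≤ (2*K+n)*a^(n+1) + a*a^n := by
          have : (2*K+n)*a^n ≤ a*a^n := Nat.mul_le_mul_right _ (by omega)
          omega
      _ = (2*K+(n+1))*a^(n+1) := by ring

-- per-pair lemma PP
lemma lemPP {ι : Type*} (m : ℕ) (hm : 2 ≤ m) (e : ι → ℕ) :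
    ∀ s : Finset ι, (∀ i ∈ s, e i ≤ 2) →
      (m-2)^(s.card+1) + (∑ i ∈ s, (2 - e i)) * (m-2)^s.card
        ≤ (m-2) * ∏ i ∈ s, (m - e i) := by
  intro s
  induction s using Finset.cons_induction with
  | empty => simp
  | cons i s hi ih =>
    intro he
    have hei : e i ≤ 2 := he i (Finset.mem_cons_self i s)
    have ih' := ih (fun j hj => he j (Finset.mem_cons_of_mem hj))
    rw [Finset.prod_cons, Finset.sum_cons, Finset.card_cons]
    have hP : (m-2)^s.card ≤ ∏ j ∈ s, (m - e j) := by
      rw [← Finset.prod_const]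
      exact Finset.prod_le_prod' (fun j hj => by have := he j (Finset.mem_cons_of_mem hj); omega)
    set k := s.card
    set S := ∑ j ∈ s, (2 - e j)
    set P := ∏ j ∈ s, (m - e j)
    set x := 2 - e i with hx
    have hsplit : m - e i = (m-2) + x := by omega
    rw [hsplit]
    have h1 : (m-2) * ((m-2)^(k+1) + S * (m-2)^k) ≤ (m-2) * ((m-2)*P) :=
      Nat.mul_le_mul_left _ ih'
    have h2 : x*((m-2)*(m-2)^k) ≤ x*((m-2)*P) :=
      Nat.mul_le_mul_left _ (Nat.mul_le_mul_left _ hP)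
    calc (m-2)^(k+1+1) + (x + S) * (m-2)^(k+1)
        = ((m-2) * ((m-2)^(k+1) + S * (m-2)^k)) + x*((m-2)*(m-2)^k) := by ring
      _ ≤ (m-2)*((m-2)*P) + x*((m-2)*P) := by omega
      _ = (m-2) * (((m-2) + x) * P) := by ring


lemma card_inter_pair (Li : Finset ℕ) (c d : ℕ) :
    (Li ∩ {c, d}).card + (if c = d ∧ c ∈ Li then 1 else 0)
      = (if c ∈ Li then 1 else 0) + (if d ∈ Li then 1 else 0) := by
  by_cases hcd : c = d
  · subst hcd
    have : ({c, c} : Finset ℕ) = {c} := by simp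
    rw [this]
    by_cases hc : c ∈ Li <;> simp [Finset.inter_singleton_of_mem,
      Finset.inter_singleton_of_notMem, hc]
  · have hsplit : ({c, d} : Finset ℕ) = {c} ∪ {d} := by
      rw [Finset.insert_eq]
    rw [hsplit, Finset.inter_union_distrib_left]
    have hdisj : Disjoint (Li ∩ {c}) (Li ∩ {d}) := by
      apply Finset.disjoint_left.2
      intro a ha hb
      simp only [Finset.mem_inter, Finset.mem_singleton] at ha hb
      exact hcd (ha.2 ▸ hb.2 ▸ rfl)
    rw [Finset.card_union_of_disjoint hdisj]
    by_cases hc : c ∈ Li <;> by_cases hd : d ∈ Li <;>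
      simp [Finset.inter_singleton_of_mem, Finset.inter_singleton_of_notMem, hc, hd, hcd]

lemma GSi {A B Li : Finset ℕ} {m : ℕ} (hm : 1 ≤ m)
    (hA : A.card = m) (hB : B.card = m) (hL : Li.card = m)
    (hs : (A ∩ B).card ≤ m - 1) :
    2*m - 1 ≤ ∑ c ∈ A, ∑ d ∈ B, (2 - (Li ∩ {c, d}).card) := by
  -- the summed identity
  have key : (∑ c ∈ A, ∑ d ∈ B, (2 - (Li ∩ {c, d}).card))
        + m * (A ∩ Li).card + m * (B ∩ Li).card
      = 2*m*m + (A ∩ (B ∩ Li)).card := by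
    have pointwise : ∀ c ∈ A, ∀ d ∈ B,
        (2 - (Li ∩ {c, d}).card) + ((if c ∈ Li then 1 else 0) + (if d ∈ Li then 1 else 0))
          = 2 + (if c = d ∧ c ∈ Li then 1 else 0) := by
      intro c _ d _
      have h := card_inter_pair Li c d
      have h2 : (Li ∩ {c, d}).card ≤ 2 := by
        calc (Li ∩ {c, d}).card ≤ ({c, d} : Finset ℕ).card :=
          Finset.card_le_card (Finset.inter_subset_right)
        _ ≤ 2 := Finset.card_insert_le _ _ |>.trans (by simp)
      omega
    have hsum : (∑ c ∈ A, ∑ d ∈ B, ((2 - (Li ∩ {c, d}).card)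
          + ((if c ∈ Li then 1 else 0) + (if d ∈ Li then 1 else 0))))
        = ∑ c ∈ A, ∑ d ∈ B, (2 + (if c = d ∧ c ∈ Li then 1 else 0)) := by
      apply Finset.sum_congr rfl
      intro c hc
      exact Finset.sum_congr rfl fun d hd => pointwise c hc d hd
    simp only [Finset.sum_add_distrib] at hsum
    -- now rewrite each ite sum
    have e1 : ∑ c ∈ A, ∑ d ∈ B, (if c ∈ Li then 1 else 0) = m * (A ∩ Li).card := by
      have : ∀ c ∈ A, ∑ d ∈ B, (if c ∈ Li then 1 else 0) = (if c ∈ Li then 1 else 0) * m := by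
        intro c _
        rw [Finset.sum_const, hB, smul_eq_mul]
        ring
      rw [Finset.sum_congr rfl this, ← Finset.sum_mul, Finset.sum_boole,
        Finset.filter_mem_eq_inter]
      simp [Nat.mul_comm]
    have e2 : ∑ c ∈ A, ∑ d ∈ B, (if d ∈ Li then 1 else 0) = m * (B ∩ Li).card := by
      have inner : ∑ d ∈ B, (if d ∈ Li then 1 else 0) = (B ∩ Li).card := by
        rw [Finset.sum_boole, Finset.filter_mem_eq_inter]
        simp
      rw [Finset.sum_congr rfl (fun c _ => inner), Finset.sum_const, hA, smul_eq_mul]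
    have e3 : ∑ c ∈ A, ∑ d ∈ B, (if c = d ∧ c ∈ Li then 1 else 0)
        = (A ∩ (B ∩ Li)).card := by
      have inner : ∀ c ∈ A, ∑ d ∈ B, (if c = d ∧ c ∈ Li then 1 else 0)
          = (if c ∈ B ∩ Li then 1 else 0) := by
        intro c _
        by_cases hc : c ∈ Li
        · simp only [hc, and_true]
          rw [Finset.sum_ite_eq B c (fun _ => 1)]
          by_cases hcB : c ∈ B <;> simp [hcB, hc]
        · simp [hc]
      rw [Finset.sum_congr rfl inner, Finset.sum_boole, Finset.filter_mem_eq_inter]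
      simp
    have e4 : ∑ c ∈ A, ∑ d ∈ B, 2 = 2*m*m := by
      simp [Finset.sum_const, hA, hB]
      ring
    rw [e1, e2, e3, e4] at hsum
    omega
  -- the union bound
  have hub : (A ∩ Li).card + (B ∩ Li).card ≤ m + (A ∩ (B ∩ Li)).card := by
    have h1 := Finset.card_inter_add_card_union (A ∩ Li) (B ∩ Li)
    have h2 : (A ∩ Li) ∪ (B ∩ Li) ⊆ Li := by
      apply Finset.union_subset <;> exact Finset.inter_subset_right
    have h3 : ((A ∩ Li) ∪ (B ∩ Li)).card ≤ m := hL ▸ Finset.card_le_card h2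
    have h4 : (A ∩ Li) ∩ (B ∩ Li) = A ∩ (B ∩ Li) := by
      ext a; simp only [Finset.mem_inter]; tauto
    have h5 := congrArg Finset.card h4
    omega
  have hh : (A ∩ (B ∩ Li)).card ≤ m - 1 := by
    have : A ∩ (B ∩ Li) ⊆ A ∩ B := by
      intro a ha
      simp only [Finset.mem_inter] at *
      tauto
    exact le_trans (Finset.card_le_card this) hs
  -- combine: X + m*p + m*q = 2m² + h, p + q ≤ m + h, h ≤ m-1 ⟹ X ≥ 2m-1
  set X := ∑ c ∈ A, ∑ d ∈ B, (2 - (Li ∩ {c, d}).card)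
  set p := (A ∩ Li).card
  set q := (B ∩ Li).card
  set h := (A ∩ (B ∩ Li)).card
  obtain ⟨k, rfl⟩ : ∃ k, m = k + 1 := ⟨m - 1, by omega⟩
  have hh' : h ≤ k := by omega
  have hmul : (k+1) * (p + q) ≤ (k+1) * (k + 1 + h) := Nat.mul_le_mul_left (k+1) hub
  have hkh : k * h ≤ k * k := Nat.mul_le_mul_left k hh'
  have : 2*k + 1 ≤ X := by nlinarith [hmul, hkh, key]
  omega


lemma lemUDarith {l m : ℕ} (hl : 2 ≤ l) (hm : 3*l + 2 ≤ m) :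
    (m-2)*(m*(m-1)^l + (m*(m-1))*(m-2)^l)
      ≤ m*m*(m-2)^(l+1) + (l*(2*m-1))*(m-2)^l := by
  obtain ⟨k, rfl⟩ : ∃ k, l = k + 1 := ⟨l - 1, by omega⟩
  obtain ⟨a, rfl⟩ : ∃ a, m = a + 2 := ⟨m - 2, by omega⟩
  have hk : 1 ≤ k := by omega
  have ha : 3*k + 3 ≤ a := by omega
  simp only [show a + 2 - 2 = a from rfl, show a + 2 - 1 = a + 1 from by omega,
    show 2*(a+2) - 1 = 2*a + 3 from by omega]
  -- key facts
  have hB := lemB a k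
  have h3 : 2*(a+1)^k ≤ 3*a^k := by
    have := lemA k a k (by omega)
    have h2 : k*(2*(a+1)^k) ≤ k*(3*a^k) := by
      calc k*(2*(a+1)^k) = 2*k*(a+1)^k := by ring
        _ ≤ (2*k+k)*a^k := this
        _ = k*(3*a^k) := by ring
    exact Nat.le_of_mul_le_mul_left h2 (by omega)
  -- remains : a(a+2)(a+1)^{k+1} + (a+2)(a+1)a^{k+2} ≤ (a+2)² a^{k+2} + (k+1)(2a+3)a^{k+1}
  have key : a*(a+2)*(a+1)^(k+1) ≤ (a+2)*a^(k+2) + (k+1)*((2*a+3)*a^(k+1)) := by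
    have s1 : a*(a+2)*(a+1)^(k+1) ≤ a*(a+2)*a^(k+1) + (k+1)*(a*(a+2)*(a+1)^k) := by
      calc a*(a+2)*(a+1)^(k+1) ≤ a*(a+2)*(a^(k+1) + (k+1)*(a+1)^k) :=
            Nat.mul_le_mul_left _ hB
        _ = a*(a+2)*a^(k+1) + (k+1)*(a*(a+2)*(a+1)^k) := by ring
    have s2 : a*(a+2)*(a+1)^k ≤ (2*a+3)*a^(k+1) := by
      have h4 : 2*(a*(a+2)*(a+1)^k) ≤ 2*((2*a+3)*a^(k+1)) := by
        calc 2*(a*(a+2)*(a+1)^k) = a*(a+2)*(2*(a+1)^k) := by ring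
          _ ≤ a*(a+2)*(3*a^k) := Nat.mul_le_mul_left _ h3
          _ = (3*a+6)*(a*a^k) := by ring
          _ ≤ (4*a+6)*(a*a^k) := Nat.mul_le_mul_right _ (by omega)
          _ = 2*((2*a+3)*a^(k+1)) := by ring
      omega
    have s3 : (k+1)*(a*(a+2)*(a+1)^k) ≤ (k+1)*((2*a+3)*a^(k+1)) :=
      Nat.mul_le_mul_left _ s2
    have s4 : a*(a+2)*a^(k+1) = (a+2)*a^(k+2) := by ring
    omega
  calc (a)*((a+2)*(a+1)^(k+1) + ((a+2)*(a+1))*a^(k+1))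
      = a*(a+2)*(a+1)^(k+1) + (a+2)*(a+1)*a^(k+2) := by ring
    _ ≤ (a+2)*a^(k+2) + (k+1)*((2*a+3)*a^(k+1)) + (a+2)*(a+1)*a^(k+2) := by omega
    _ ≤ (a+2)*(a+2)*a^((k+1)+1) + ((k+1)*(2*a+3))*a^(k+1) := by
        have : (a+2)*a^(k+2) + (a+2)*(a+1)*a^(k+2) = (a+2)*(a+2)*a^(k+2) := by ring
        have h5 : (k+1)*((2*a+3)*a^(k+1)) = ((k+1)*(2*a+3))*a^(k+1) := by ring
        have h6 : (a+2)*(a+2)*a^((k+1)+1) = (a+2)*(a+2)*a^(k+2) := rfl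
        have h7 : (a+2)*(a+1)*a^(k+2) = (a+2)*(a+1)*a^(k+2) := rfl
        omega


theorem UD {l m : ℕ} (hl : 2 ≤ l) (hm : 3*l + 2 ≤ m)
    (L : Fin 2 ⊕ Fin l → Finset ℕ) (hL : IsAssignment L m) :
    m*(m-1)^l + (m*(m-1))*(m-2)^l ≤ NL l L := by
  have hm2 : 2 ≤ m := by omega
  set A := L (.inl 0) with hAdef
  set B := L (.inl 1) with hBdef
  have hA : A.card = m := hL _
  have hB : B.card = m := hL _
  have hLi : ∀ i : Fin l, (L (.inr i)).card = m := fun i => hL _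
  -- each factor in the product
  have hfact : ∀ (c d : ℕ) (i : Fin l),
      (L (.inr i) \ {c, d}).card = m - (L (.inr i) ∩ {c, d}).card := by
    intro c d i
    have := Finset.card_inter_add_card_sdiff (L (.inr i)) {c, d}
    have h2 := hLi i
    omega
  have hecard : ∀ (c d : ℕ) (i : Fin l), (L (.inr i) ∩ {c, d}).card ≤ 2 := by
    intro c d i
    calc (L (.inr i) ∩ {c, d}).card ≤ ({c, d} : Finset ℕ).card :=
          Finset.card_le_card Finset.inter_subset_right
      _ ≤ 2 := (Finset.card_insert_le _ _).trans (by simp)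
  have hptwise : ∀ (c d : ℕ),
      (if c = d then (m-1)^l else (m-2)^l) ≤ ∏ i : Fin l, (L (.inr i) \ {c, d}).card := by
    intro c d
    by_cases hcd : c = d
    · subst hcd
      rw [if_pos rfl]
      have h0 : (m-1)^l = ∏ _i : Fin l, (m-1) := by simp
      rw [h0]
      apply Finset.prod_le_prod'
      intro i _
      rw [hfact]
      have h1 : (L (.inr i) ∩ {c, c}).card ≤ 1 := by
        calc (L (.inr i) ∩ {c, c}).card ≤ ({c, c} : Finset ℕ).card :=
          Finset.card_le_card Finset.inter_subset_right
        _ ≤ 1 := by simp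
      omega
    · rw [if_neg hcd]
      have h0 : (m-2)^l = ∏ _i : Fin l, (m-2) := by simp
      rw [h0]
      apply Finset.prod_le_prod'
      intro i _
      rw [hfact]
      have := hecard c d i
      omega
  by_cases hAB : A = B
  · -- diagonal case
    have hds : ∑ c ∈ A, ∑ d ∈ B, (if c = d then (m-1)^l else (m-2)^l)
        = m * (m-1)^l + (m * (m - 1)) * (m-2)^l := by
      rw [← hAB]
      calc ∑ c ∈ A, ∑ d ∈ A, (if c = d then (m-1)^l else (m-2)^l)
          = A.card * (m-1)^l + (A.card * (A.card - 1)) * (m-2)^l :=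
            diagsum _ (fun c _ => if_pos rfl) (fun c _ d _ h => if_neg h)
        _ = m * (m-1)^l + (m * (m - 1)) * (m-2)^l := by rw [hA]
    calc m*(m-1)^l + (m*(m-1))*(m-2)^l
        = ∑ c ∈ A, ∑ d ∈ B, (if c = d then (m-1)^l else (m-2)^l) := hds.symm
      _ ≤ ∑ c ∈ A, ∑ d ∈ B, ∏ i : Fin l, (L (.inr i) \ {c, d}).card := by
          apply Finset.sum_le_sum
          intro c hc
          exact Finset.sum_le_sum (fun d hd => hptwise c d)
      _ = NL l L := rfl
  · -- off-diagonal case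
    have hs : (A ∩ B).card ≤ m - 1 := by
      by_contra hcon
      push_neg at hcon
      have h1 : (A ∩ B).card ≤ m := hA ▸ Finset.card_le_card Finset.inter_subset_left
      have h2 : (A ∩ B).card = m := by omega
      have h3 : A ∩ B = A := Finset.eq_of_subset_of_card_le Finset.inter_subset_left (by omega)
      have h4 : A ⊆ B := by rw [← h3]; exact Finset.inter_subset_right
      exact hAB (Finset.eq_of_subset_of_card_le h4 (by omega))
    -- multiply through by (m-2)
    have main : (m-2) * (m*(m-1)^l + (m*(m-1))*(m-2)^l) ≤ (m-2) * NL l L := by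
      have step1 : ∀ c ∈ A, ∀ d ∈ B,
          (m-2)^(l+1) + (∑ i : Fin l, (2 - (L (.inr i) ∩ {c, d}).card)) * (m-2)^l
            ≤ (m-2) * ∏ i : Fin l, (L (.inr i) \ {c, d}).card := by
        intro c _ d _
        have hp := lemPP m hm2 (fun i => (L (.inr i) ∩ {c, d}).card) Finset.univ
          (fun i _ => hecard c d i)
        rw [Finset.card_univ, Fintype.card_fin] at hp
        calc (m-2)^(l+1) + (∑ i : Fin l, (2 - (L (.inr i) ∩ {c, d}).card)) * (m-2)^l
            ≤ (m-2) * ∏ i : Fin l, (m - (L (.inr i) ∩ {c, d}).card) := hp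
          _ = (m-2) * ∏ i : Fin l, (L (.inr i) \ {c, d}).card := by
              congr 1
              exact Finset.prod_congr rfl (fun i _ => (hfact c d i).symm)
      have step2 : m*m*(m-2)^(l+1)
            + (∑ c ∈ A, ∑ d ∈ B, ∑ i : Fin l, (2 - (L (.inr i) ∩ {c, d}).card)) * (m-2)^l
          ≤ (m-2) * NL l L := by
        have : ∀ c ∈ A, m*(m-2)^(l+1)
              + (∑ d ∈ B, ∑ i : Fin l, (2 - (L (.inr i) ∩ {c, d}).card)) * (m-2)^l
            ≤ ∑ d ∈ B, (m-2) * ∏ i : Fin l, (L (.inr i) \ {c, d}).card := by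
          intro c hc
          calc m*(m-2)^(l+1)
                + (∑ d ∈ B, ∑ i : Fin l, (2 - (L (.inr i) ∩ {c, d}).card)) * (m-2)^l
              = ∑ d ∈ B, ((m-2)^(l+1)
                + (∑ i : Fin l, (2 - (L (.inr i) ∩ {c, d}).card)) * (m-2)^l) := by
                rw [Finset.sum_add_distrib, Finset.sum_const, hB, smul_eq_mul,
                  ← Finset.sum_mul]
            _ ≤ ∑ d ∈ B, (m-2) * ∏ i : Fin l, (L (.inr i) \ {c, d}).card :=
                Finset.sum_le_sum (fun d hd => step1 c hc d hd)
        calc m*m*(m-2)^(l+1)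
              + (∑ c ∈ A, ∑ d ∈ B, ∑ i : Fin l, (2 - (L (.inr i) ∩ {c, d}).card)) * (m-2)^l
            = ∑ c ∈ A, (m*(m-2)^(l+1)
              + (∑ d ∈ B, ∑ i : Fin l, (2 - (L (.inr i) ∩ {c, d}).card)) * (m-2)^l) := by
              rw [Finset.sum_add_distrib, Finset.sum_const, hA, smul_eq_mul,
                ← Finset.sum_mul]
              ring
          _ ≤ ∑ c ∈ A, ∑ d ∈ B, (m-2) * ∏ i : Fin l, (L (.inr i) \ {c, d}).card :=
              Finset.sum_le_sum this
          _ = (m-2) * ∑ c ∈ A, ∑ d ∈ B, ∏ i : Fin l, (L (.inr i) \ {c, d}).card := by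
              rw [Finset.mul_sum]
              exact Finset.sum_congr rfl (fun c _ => (Finset.mul_sum _ _ _).symm)
          _ = (m-2) * NL l L := rfl
      have step3 : l*(2*m-1)
          ≤ ∑ c ∈ A, ∑ d ∈ B, ∑ i : Fin l, (2 - (L (.inr i) ∩ {c, d}).card) := by
        have hswap : ∑ c ∈ A, ∑ d ∈ B, ∑ i : Fin l, (2 - (L (.inr i) ∩ {c, d}).card)
            = ∑ i : Fin l, ∑ c ∈ A, ∑ d ∈ B, (2 - (L (.inr i) ∩ {c, d}).card) := by
          calc ∑ c ∈ A, ∑ d ∈ B, ∑ i : Fin l, (2 - (L (.inr i) ∩ {c, d}).card)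
              = ∑ c ∈ A, ∑ i : Fin l, ∑ d ∈ B, (2 - (L (.inr i) ∩ {c, d}).card) :=
                Finset.sum_congr rfl (fun c _ => Finset.sum_comm)
            _ = ∑ i : Fin l, ∑ c ∈ A, ∑ d ∈ B, (2 - (L (.inr i) ∩ {c, d}).card) :=
                Finset.sum_comm
        rw [hswap]
        calc (l : ℕ)*(2*m-1) = ∑ _i : Fin l, (2*m-1) := by
              rw [Finset.sum_const, Finset.card_univ, Fintype.card_fin, smul_eq_mul]
          _ ≤ ∑ i : Fin l, ∑ c ∈ A, ∑ d ∈ B, (2 - (L (.inr i) ∩ {c, d}).card) :=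
              Finset.sum_le_sum (fun i _ => GSi (by omega) hA hB (hLi i) hs)
      calc (m-2) * (m*(m-1)^l + (m*(m-1))*(m-2)^l)
          ≤ m*m*(m-2)^(l+1) + (l*(2*m-1))*(m-2)^l := lemUDarith hl hm
        _ ≤ m*m*(m-2)^(l+1)
            + (∑ c ∈ A, ∑ d ∈ B, ∑ i : Fin l, (2 - (L (.inr i) ∩ {c, d}).card)) * (m-2)^l :=
            by
              have := Nat.mul_le_mul_right ((m-2)^l) step3
              omega
        _ ≤ (m-2) * NL l L := step2
    exact Nat.le_of_mul_le_mul_left main (by omega)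


lemma mem3 {l : ℕ} (L : Fin 2 ⊕ Fin l → Finset ℕ) (hL : IsAssignment L 3) :
    ∃ f, IsProperListColoring (K2l l) L f := by
  have h0 : (L (.inl 0)).Nonempty := by rw [← Finset.card_pos, hL]; omega
  have h1 : (L (.inl 1)).Nonempty := by rw [← Finset.card_pos, hL]; omega
  obtain ⟨c, hc⟩ := h0
  obtain ⟨d, hd⟩ := h1
  have hmid : ∀ i : Fin l, (L (.inr i) \ {c, d}).Nonempty := by
    intro i
    rw [← Finset.card_pos]
    have h2 := Finset.le_card_sdiff ({c, d} : Finset ℕ) (L (.inr i))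
    have h3 : ({c, d} : Finset ℕ).card ≤ 2 := (Finset.card_insert_le _ _).trans (by simp)
    have h4 := hL (.inr i)
    omega
  choose g hg using hmid
  refine ⟨Sum.elim ![c, d] g, ?_⟩
  rw [isProper_iff]
  constructor
  · rintro (x | i)
    · fin_cases x
      · exact hc
      · exact hd
    · exact (Finset.mem_sdiff.1 (hg i)).1
  · intro x i
    have h2 := (Finset.mem_sdiff.1 (hg i)).2
    simp only [Finset.mem_insert, Finset.mem_singleton] at h2
    push_neg at h2
    fin_cases x
    · exact fun h => h2.1 h.symm
    · exact fun h => h2.2 h.symm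

lemma listChromNum_K2l {l : ℕ} (hl : 16 ≤ l) : listChromNum (K2l l) = 3 := by
  have h3 : 3 ∈ {k | ∀ L : (Fin 2 ⊕ Fin l) → Finset ℕ, IsAssignment L k →
      ∃ f, IsProperListColoring (K2l l) L f} := fun L hL => mem3 L hL
  rw [listChromNum]
  apply le_antisymm (Nat.sInf_le h3)
  by_contra hcon
  push_neg at hcon
  have hmem := Nat.sInf_mem (⟨3, h3⟩ : Set.Nonempty _)
  obtain ⟨k, hkeq⟩ : ∃ k, k = sInf {k | ∀ L : (Fin 2 ⊕ Fin l) → Finset ℕ,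
      IsAssignment L k → ∃ f, IsProperListColoring (K2l l) L f} := ⟨_, rfl⟩
  rw [← hkeq] at hmem hcon
  have hk2 : k ≤ 2 := by omega
  have hadj : ∀ (x : Fin 2) (i : Fin l), (K2l l).Adj (.inl x) (.inr i) := by
    intro x i
    simp [K2l]
  interval_cases k
  · obtain ⟨f, hf⟩ := hmem (fun _ => (∅ : Finset ℕ)) (fun v => rfl)
    simpa using hf.1 (.inl 0)
  · obtain ⟨f, hf⟩ := hmem (fun _ => ({0} : Finset ℕ)) (fun v => rfl)
    have e0 : f (.inl 0) = 0 := by simpa using hf.1 (.inl 0)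
    have e1 : f (.inr ⟨0, by omega⟩) = 0 := by simpa using hf.1 (.inr ⟨0, by omega⟩)
    exact hf.2 (hadj 0 ⟨0, by omega⟩) (by rw [e0, e1])
  · -- k = 2
    set L2 : Fin 2 ⊕ Fin l → Finset ℕ :=
      Sum.elim ![{0, 1}, {2, 3}]
        (fun i => {if i.val < 2 then 0 else 1, if i.val % 2 = 0 then 2 else 3}) with hL2
    have hass : IsAssignment L2 2 := by
      rintro (x | i)
      · fin_cases x <;> simp [hL2]
      · simp only [hL2, Sum.elim_inr]
        rw [Finset.card_insert_of_notMem (by split <;> split <;> simp), Finset.card_singleton]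
    obtain ⟨f, hf⟩ := hmem L2 hass
    have hc : f (.inl 0) = 0 ∨ f (.inl 0) = 1 := by
      have := hf.1 (.inl 0)
      simpa [hL2] using this
    have hd : f (.inl 1) = 2 ∨ f (.inl 1) = 3 := by
      have := hf.1 (.inl 1)
      simpa [hL2] using this
    have key : ∀ i : Fin l, f (.inr i) ≠ f (.inl 0) ∧ f (.inr i) ≠ f (.inl 1) := by
      intro i
      exact ⟨fun h => hf.2 (hadj 0 i) h.symm, fun h => hf.2 (hadj 1 i) h.symm⟩
    -- choose the middle vertex whose list is {f (inl 0), f (inl 1)}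
    have hbad : ∀ i : Fin l, f (.inr i) ∈ L2 (.inr i) := fun i => hf.1 (.inr i)
    rcases hc with h0 | h0 <;> rcases hd with h1 | h1
    · have := hbad ⟨0, by omega⟩
      have hi := key ⟨0, by omega⟩
      simp [hL2, h0, h1] at this
      rcases this with h | h
      · exact hi.1 (by rw [h, h0])
      · exact hi.2 (by rw [h, h1])
    · have := hbad ⟨1, by omega⟩
      have hi := key ⟨1, by omega⟩
      simp [hL2, h0, h1] at this
      rcases this with h | h
      · exact hi.1 (by rw [h, h0])
      · exact hi.2 (by rw [h, h1])
    · have := hbad ⟨2, by omega⟩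
      have hi := key ⟨2, by omega⟩
      simp [hL2, h0, h1] at this
      rcases this with h | h
      · exact hi.1 (by rw [h, h0])
      · exact hi.2 (by rw [h, h1])
    · have := hbad ⟨3, by omega⟩
      have hi := key ⟨3, by omega⟩
      simp [hL2, h0, h1] at this
      rcases this with h | h
      · exact hi.1 (by rw [h, h0])
      · exact hi.2 (by rw [h, h1])


def DD (m : ℕ) : Finset ℕ := Finset.Ico 4 (m+2)
def TT (m k : ℕ) : Finset ℕ := insert (k / 2) (insert (k % 2 + 2) (DD m))
def tp (t n : ℕ) : ℕ := if n < t then 0 else if n < 2*t then 1 else if n < 3*t then 2 else 3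
def AA (m : ℕ) : Finset ℕ := insert 0 (insert 1 (DD m))
def BB (m : ℕ) : Finset ℕ := insert 2 (insert 3 (DD m))
def Lbad (l m t : ℕ) : Fin 2 ⊕ Fin l → Finset ℕ :=
  Sum.elim ![AA m, BB m] (fun i => TT m (tp t i.val))

lemma card_DD (m : ℕ) : (DD m).card = m - 2 := by
  rw [DD, Nat.card_Ico]
  omega

lemma card_AA {m : ℕ} (hm : 3 ≤ m) : (AA m).card = m := by
  rw [AA, Finset.card_insert_of_notMem (by simp [DD]),
    Finset.card_insert_of_notMem (by simp [DD]), card_DD]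
  omega

lemma card_BB {m : ℕ} (hm : 3 ≤ m) : (BB m).card = m := by
  rw [BB, Finset.card_insert_of_notMem (by simp [DD]),
    Finset.card_insert_of_notMem (by simp [DD]), card_DD]
  omega

lemma card_TT {m : ℕ} (hm : 3 ≤ m) (k : ℕ) (hk : k ≤ 3) : (TT m k).card = m := by
  interval_cases k <;>
    rw [TT] <;>
    rw [Finset.card_insert_of_notMem (by simp [DD]),
      Finset.card_insert_of_notMem (by simp [DD]), card_DD] <;>
    omega

lemma isAssignment_Lbad {l m t : ℕ} (hm : 3 ≤ m) : (∀ v, ((Lbad l m t) v).card = m) := by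
  rintro (x | i)
  · fin_cases x
    · simpa [Lbad] using card_AA hm
    · simpa [Lbad] using card_BB hm
  · have : tp t i.val ≤ 3 := by
      rw [tp]; split <;> [skip; split <;> [skip; split]] <;> omega
    simpa [Lbad] using card_TT hm _ this

lemma prodsplit {l t : ℕ} (h3t : 3*t ≤ l) (G : ℕ → ℕ) :
    ∏ i : Fin l, G (tp t i.val)
      = G 0 ^ t * G 1 ^ t * G 2 ^ t * G 3 ^ (l - 3*t) := by
  have h := Fin.prod_univ_eq_prod_range (fun n => G (tp t n)) l
  rw [h]
  have e0 : ∀ a b : ℕ, (∀ n ∈ Finset.Ico a b, G (tp t n) = G (tp t a)) →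
      ∏ n ∈ Finset.Ico a b, G (tp t n) = G (tp t a) ^ (b - a) := by
    intro a b hc
    rw [Finset.prod_congr rfl hc, Finset.prod_const, Nat.card_Ico]
  rw [Finset.range_eq_Ico]
  rw [← Finset.prod_Ico_consecutive (fun n => G (tp t n)) (Nat.zero_le (3*t)) h3t]
  rw [← Finset.prod_Ico_consecutive (fun n => G (tp t n)) (by omega : 0 ≤ 2*t) (by omega : 2*t ≤ 3*t)]
  rw [← Finset.prod_Ico_consecutive (fun n => G (tp t n)) (by omega : 0 ≤ t) (by omega : t ≤ 2*t)]
  by_cases ht : t = 0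
  · subst ht
    simp only [Nat.mul_zero, Finset.Ico_self, Finset.prod_empty, Nat.one_mul, pow_zero]
    rw [e0 0 l (fun n hn => by rw [tp, tp]; simp)]
    rw [tp]
    simp
  have e1 : ∏ n ∈ Finset.Ico 0 t, G (tp t n) = G 0 ^ t := by
    have := e0 0 t (fun n hn => by
      simp only [Finset.mem_Ico] at hn
      have : tp t n = tp t 0 := by rw [tp, tp]; simp only [if_pos hn.2]; simp [Nat.pos_of_ne_zero ht]
      rw [this])
    simpa [tp, Nat.pos_of_ne_zero ht] using this
  have e2 : ∏ n ∈ Finset.Ico t (2*t), G (tp t n) = G 1 ^ t := by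
    rw [e0 t (2*t) (fun n hn => by
      simp only [Finset.mem_Ico] at hn
      rw [tp, tp]
      rw [if_neg (by omega), if_pos (by omega), if_neg (by omega), if_pos (by omega)])]
    rw [tp, if_neg (by omega), if_pos (by omega)]
    congr 1
    omega
  have e3 : ∏ n ∈ Finset.Ico (2*t) (3*t), G (tp t n) = G 2 ^ t := by
    rw [e0 (2*t) (3*t) (fun n hn => by
      simp only [Finset.mem_Ico] at hn
      rw [tp, tp]
      rw [if_neg (by omega), if_neg (by omega), if_pos (by omega),
        if_neg (by omega), if_neg (by omega), if_pos (by omega)])]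
    rw [tp, if_neg (by omega), if_neg (by omega), if_pos (by omega)]
    congr 1
    omega
  have e4 : ∏ n ∈ Finset.Ico (3*t) l, G (tp t n) = G 3 ^ (l - 3*t) := by
    by_cases h3l : 3*t = l
    · rw [h3l]; simp
    rw [e0 (3*t) l (fun n hn => by
      simp only [Finset.mem_Ico] at hn
      rw [tp, tp]
      rw [if_neg (by omega), if_neg (by omega), if_neg (by omega),
        if_neg (by omega), if_neg (by omega), if_neg (by omega)])]
    rw [tp, if_neg (by omega), if_neg (by omega), if_neg (by omega)]
  rw [e1, e2, e3, e4]

lemma NL_Lbad {l m t : ℕ} (hm : 3 ≤ m) (h3t : 3*t ≤ l) :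
    NL l (Lbad l m t) = ((m-2) * (m-1)^l + ((m-2)*(m-3)) * (m-2)^l)
      + ((m-2) * ((m-2)^(2*t) * (m-1)^(l-2*t)) + (m-2) * ((m-2)^(l-2*t) * (m-1)^(2*t)))
      + ((m-2) * ((m-2)^(2*t) * (m-1)^(l-2*t)) + (m-2) * ((m-2)^(l-2*t) * (m-1)^(2*t)))
      + ((m-2)^t * (m-1)^(2*t) * m^(l-3*t)
         + 2 * ((m-2)^t * (m-1)^(l-2*t) * m^t)
         + (m-2)^(l-3*t) * (m-1)^(2*t) * m^t) := by
  have hA : (Lbad l m t) (.inl 0) = AA m := by simp [Lbad]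
  have hB : (Lbad l m t) (.inl 1) = BB m := by simp [Lbad]
  have hT : ∀ i : Fin l, (Lbad l m t) (.inr i) = TT m (tp t i.val) := by
    intro i; simp [Lbad]
  have hTcard : ∀ k ≤ 3, (TT m k).card = m := fun k hk => card_TT hm k hk
  -- the generic product evaluation for a pair (c, d)
  have hP : ∀ c d : ℕ,
      (∏ i : Fin l, ((Lbad l m t) (.inr i) \ {c, d}).card)
        = ((TT m 0 \ {c,d}).card)^t * ((TT m 1 \ {c,d}).card)^t
          * ((TT m 2 \ {c,d}).card)^t * ((TT m 3 \ {c,d}).card)^(l-3*t) := by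
    intro c d
    have := prodsplit h3t (fun k => (TT m k \ {c, d}).card)
    simpa [hT] using this
  -- membership facts for special colors in TT m k
  have hT0 : TT m 0 = insert 0 (insert 2 (DD m)) := by rw [TT]
  have hT1 : TT m 1 = insert 0 (insert 3 (DD m)) := by rw [TT]
  have hT2 : TT m 2 = insert 1 (insert 2 (DD m)) := by rw [TT]
  have hT3 : TT m 3 = insert 1 (insert 3 (DD m)) := by rw [TT]
  have hDsub : ∀ k ≤ 3, ∀ x ∈ DD m, x ∈ TT m k := by
    intro k hk x hx
    rw [TT]
    simp [hx]
  have hDge : ∀ x ∈ DD m, 4 ≤ x ∧ x < m + 2 := by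
    intro x hx
    simpa [DD, Finset.mem_Ico] using hx
  -- generic value lemmas
  have vb : ∀ k, k ≤ 3 → ∀ {c d : ℕ}, c ∈ TT m k → d ∈ TT m k → c ≠ d →
      (TT m k \ {c, d}).card = m - 2 := by
    intro k hk c d hc hd hne
    rw [sd_both hc hd hne, hTcard k hk]
  have vl : ∀ k, k ≤ 3 → ∀ {c d : ℕ}, c ∈ TT m k → d ∉ TT m k →
      (TT m k \ {c, d}).card = m - 1 := by
    intro k hk c d hc hd
    rw [sd_left hc hd, hTcard k hk]
  have vr : ∀ k, k ≤ 3 → ∀ {c d : ℕ}, c ∉ TT m k → d ∈ TT m k →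
      (TT m k \ {c, d}).card = m - 1 := by
    intro k hk c d hc hd
    rw [sd_right hc hd, hTcard k hk]
  have vn : ∀ k, k ≤ 3 → ∀ {c d : ℕ}, c ∉ TT m k → d ∉ TT m k →
      (TT m k \ {c, d}).card = m := by
    intro k hk c d hc hd
    rw [sd_none hc hd, hTcard k hk]
  have vdg : ∀ k, k ≤ 3 → ∀ {c : ℕ}, c ∈ TT m k →
      (TT m k \ {c, c}).card = m - 1 := by
    intro k hk c hc
    rw [sd_diag hc, hTcard k hk]
  -- power merging helpers
  have pm1 : ∀ b : ℕ, b^t * b^(l-3*t) = b^(l-2*t) := by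
    intro b
    rw [← pow_add]
    congr 1
    omega
  have pm2 : ∀ b : ℕ, b^t * b^t = b^(2*t) := by
    intro b
    rw [← pow_add]
    congr 1
    omega
  have pm3 : ∀ b : ℕ, b^(2*t) * b^(l-2*t) = b^l := by
    intro b
    rw [← pow_add]
    congr 1
    omega
  -- membership simp facts
  have m02 : (0:ℕ) ∈ TT m 0 := by rw [hT0]; simp
  have m22 : (2:ℕ) ∈ TT m 0 := by rw [hT0]; simp
  have m01 : (0:ℕ) ∈ TT m 1 := by rw [hT1]; simp
  have m31 : (3:ℕ) ∈ TT m 1 := by rw [hT1]; simp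
  have m12 : (1:ℕ) ∈ TT m 2 := by rw [hT2]; simp
  have m222 : (2:ℕ) ∈ TT m 2 := by rw [hT2]; simp
  have m13 : (1:ℕ) ∈ TT m 3 := by rw [hT3]; simp
  have m33 : (3:ℕ) ∈ TT m 3 := by rw [hT3]; simp
  have n20 : (1:ℕ) ∉ TT m 0 := by rw [hT0]; simp [DD]
  have n30 : (3:ℕ) ∉ TT m 0 := by rw [hT0]; simp [DD]
  have n11 : (1:ℕ) ∉ TT m 1 := by rw [hT1]; simp [DD]
  have n21 : (2:ℕ) ∉ TT m 1 := by rw [hT1]; simp [DD]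
  have n02 : (0:ℕ) ∉ TT m 2 := by rw [hT2]; simp [DD]
  have n32 : (3:ℕ) ∉ TT m 2 := by rw [hT2]; simp [DD]
  have n03 : (0:ℕ) ∉ TT m 3 := by rw [hT3]; simp [DD]
  have n23 : (2:ℕ) ∉ TT m 3 := by rw [hT3]; simp [DD]
  have mD : ∀ k, k ≤ 3 → ∀ {x : ℕ}, x ∈ DD m → x ∈ TT m k := by
    intro k hk x hx
    exact hDsub k hk x hx
  have nD0 : ∀ {x : ℕ}, x ∈ DD m → x ≠ 0 := fun hx => by have := hDge _ hx; omega
  have nD1 : ∀ {x : ℕ}, x ∈ DD m → x ≠ 1 := fun hx => by have := hDge _ hx; omega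
  have nD2 : ∀ {x : ℕ}, x ∈ DD m → x ≠ 2 := fun hx => by have := hDge _ hx; omega
  have nD3 : ∀ {x : ℕ}, x ∈ DD m → x ≠ 3 := fun hx => by have := hDge _ hx; omega
  -- block values
  have P02 : (∏ i : Fin l, ((Lbad l m t) (.inr i) \ {0, 2}).card)
      = (m-2)^t * (m-1)^(2*t) * m^(l-3*t) := by
    rw [hP 0 2, vb 0 (by omega) m02 m22 (by omega), vl 1 (by omega) m01 n21,
      vr 2 (by omega) n02 m222, vn 3 (by omega) n03 n23]
    calc (m-2)^t * (m-1)^t * (m-1)^t * m^(l-3*t)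
        = (m-2)^t * ((m-1)^t * (m-1)^t) * m^(l-3*t) := by ring
      _ = (m-2)^t * (m-1)^(2*t) * m^(l-3*t) := by rw [pm2]
  have P03 : (∏ i : Fin l, ((Lbad l m t) (.inr i) \ {0, 3}).card)
      = (m-2)^t * (m-1)^(l-2*t) * m^t := by
    rw [hP 0 3, vl 0 (by omega) m02 n30, vb 1 (by omega) m01 m31 (by omega),
      vn 2 (by omega) n02 n32, vr 3 (by omega) n03 m33]
    calc (m-1)^t * (m-2)^t * m^t * (m-1)^(l-3*t)
        = (m-2)^t * ((m-1)^t * (m-1)^(l-3*t)) * m^t := by ring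
      _ = (m-2)^t * (m-1)^(l-2*t) * m^t := by rw [pm1]
  have P12 : (∏ i : Fin l, ((Lbad l m t) (.inr i) \ {1, 2}).card)
      = (m-2)^t * (m-1)^(l-2*t) * m^t := by
    rw [hP 1 2, vr 0 (by omega) n20 m22, vn 1 (by omega) n11 n21,
      vb 2 (by omega) m12 m222 (by omega), vl 3 (by omega) m13 n23]
    calc (m-1)^t * m^t * (m-2)^t * (m-1)^(l-3*t)
        = (m-2)^t * ((m-1)^t * (m-1)^(l-3*t)) * m^t := by ring
      _ = (m-2)^t * (m-1)^(l-2*t) * m^t := by rw [pm1]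
  have P13 : (∏ i : Fin l, ((Lbad l m t) (.inr i) \ {1, 3}).card)
      = (m-2)^(l-3*t) * (m-1)^(2*t) * m^t := by
    rw [hP 1 3, vn 0 (by omega) n20 n30, vr 1 (by omega) n11 m31,
      vl 2 (by omega) m12 n32, vb 3 (by omega) m13 m33 (by omega)]
    calc m^t * (m-1)^t * (m-1)^t * (m-2)^(l-3*t)
        = (m-2)^(l-3*t) * ((m-1)^t * (m-1)^t) * m^t := by ring
      _ = (m-2)^(l-3*t) * (m-1)^(2*t) * m^t := by rw [pm2]
  have P0d : ∀ d ∈ DD m, (∏ i : Fin l, ((Lbad l m t) (.inr i) \ {0, d}).card)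
      = (m-2)^(2*t) * (m-1)^(l-2*t) := by
    intro d hd
    rw [hP 0 d, vb 0 (by omega) m02 (mD 0 (by omega) hd) (Ne.symm (nD0 hd)),
      vb 1 (by omega) m01 (mD 1 (by omega) hd) (Ne.symm (nD0 hd)),
      vr 2 (by omega) n02 (mD 2 (by omega) hd), vr 3 (by omega) n03 (mD 3 (by omega) hd)]
    calc (m-2)^t * (m-2)^t * (m-1)^t * (m-1)^(l-3*t)
        = ((m-2)^t * (m-2)^t) * ((m-1)^t * (m-1)^(l-3*t)) := by ring
      _ = (m-2)^(2*t) * (m-1)^(l-2*t) := by rw [pm1, pm2]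
  have P1d : ∀ d ∈ DD m, (∏ i : Fin l, ((Lbad l m t) (.inr i) \ {1, d}).card)
      = (m-2)^(l-2*t) * (m-1)^(2*t) := by
    intro d hd
    rw [hP 1 d, vr 0 (by omega) n20 (mD 0 (by omega) hd),
      vr 1 (by omega) n11 (mD 1 (by omega) hd),
      vb 2 (by omega) m12 (mD 2 (by omega) hd) (Ne.symm (nD1 hd)),
      vb 3 (by omega) m13 (mD 3 (by omega) hd) (Ne.symm (nD1 hd))]
    calc (m-1)^t * (m-1)^t * (m-2)^t * (m-2)^(l-3*t)
        = ((m-2)^t * (m-2)^(l-3*t)) * ((m-1)^t * (m-1)^t) := by ring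
      _ = (m-2)^(l-2*t) * (m-1)^(2*t) := by rw [pm1, pm2]
  have Pc2 : ∀ c ∈ DD m, (∏ i : Fin l, ((Lbad l m t) (.inr i) \ {c, 2}).card)
      = (m-2)^(2*t) * (m-1)^(l-2*t) := by
    intro c hc
    rw [hP c 2, vb 0 (by omega) (mD 0 (by omega) hc) m22 (nD2 hc),
      vl 1 (by omega) (mD 1 (by omega) hc) n21,
      vb 2 (by omega) (mD 2 (by omega) hc) m222 (nD2 hc),
      vl 3 (by omega) (mD 3 (by omega) hc) n23]
    calc (m-2)^t * (m-1)^t * (m-2)^t * (m-1)^(l-3*t)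
        = ((m-2)^t * (m-2)^t) * ((m-1)^t * (m-1)^(l-3*t)) := by ring
      _ = (m-2)^(2*t) * (m-1)^(l-2*t) := by rw [pm1, pm2]
  have Pc3 : ∀ c ∈ DD m, (∏ i : Fin l, ((Lbad l m t) (.inr i) \ {c, 3}).card)
      = (m-2)^(l-2*t) * (m-1)^(2*t) := by
    intro c hc
    rw [hP c 3, vl 0 (by omega) (mD 0 (by omega) hc) n30,
      vb 1 (by omega) (mD 1 (by omega) hc) m31 (nD3 hc),
      vl 2 (by omega) (mD 2 (by omega) hc) n32,
      vb 3 (by omega) (mD 3 (by omega) hc) m33 (nD3 hc)]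
    calc (m-1)^t * (m-2)^t * (m-1)^t * (m-2)^(l-3*t)
        = ((m-2)^t * (m-2)^(l-3*t)) * ((m-1)^t * (m-1)^t) := by ring
      _ = (m-2)^(l-2*t) * (m-1)^(2*t) := by rw [pm1, pm2]
  have Pcd : ∀ c ∈ DD m, ∀ d ∈ DD m,
      (∏ i : Fin l, ((Lbad l m t) (.inr i) \ {c, d}).card)
        = if c = d then (m-1)^l else (m-2)^l := by
    intro c hc d hd
    by_cases hcd : c = d
    · subst hcd
      rw [if_pos rfl, hP c c, vdg 0 (by omega) (mD 0 (by omega) hc),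
        vdg 1 (by omega) (mD 1 (by omega) hc), vdg 2 (by omega) (mD 2 (by omega) hc),
        vdg 3 (by omega) (mD 3 (by omega) hc)]
      calc (m-1)^t * (m-1)^t * (m-1)^t * (m-1)^(l-3*t)
          = ((m-1)^t * (m-1)^t) * ((m-1)^t * (m-1)^(l-3*t)) := by ring
        _ = (m-1)^(2*t) * (m-1)^(l-2*t) := by rw [pm1, pm2]
        _ = (m-1)^l := pm3 _
    · rw [if_neg hcd, hP c d, vb 0 (by omega) (mD 0 (by omega) hc) (mD 0 (by omega) hd) hcd,
        vb 1 (by omega) (mD 1 (by omega) hc) (mD 1 (by omega) hd) hcd,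
        vb 2 (by omega) (mD 2 (by omega) hc) (mD 2 (by omega) hd) hcd,
        vb 3 (by omega) (mD 3 (by omega) hc) (mD 3 (by omega) hd) hcd]
      calc (m-2)^t * (m-2)^t * (m-2)^t * (m-2)^(l-3*t)
          = ((m-2)^t * (m-2)^t) * ((m-2)^t * (m-2)^(l-3*t)) := by ring
        _ = (m-2)^(2*t) * (m-2)^(l-2*t) := by rw [pm1, pm2]
        _ = (m-2)^l := pm3 _
  -- assemble the double sum
  have h0A : (0:ℕ) ∉ insert 1 (DD m) := by simp [DD]
  have h1D : (1:ℕ) ∉ DD m := by simp [DD]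
  have h2B : (2:ℕ) ∉ insert 3 (DD m) := by simp [DD]
  have h3D : (3:ℕ) ∉ DD m := by simp [DD]
  rw [NL, hA, hB, AA, BB]
  rw [Finset.sum_insert h0A, Finset.sum_insert h1D]
  rw [Finset.sum_insert h2B, Finset.sum_insert h3D]
  rw [Finset.sum_insert h2B, Finset.sum_insert h3D]
  have hsum0D : ∑ d ∈ DD m, (∏ i : Fin l, ((Lbad l m t) (.inr i) \ {0, d}).card)
      = (m-2) * ((m-2)^(2*t) * (m-1)^(l-2*t)) := by
    rw [Finset.sum_congr rfl P0d, Finset.sum_const, card_DD, smul_eq_mul]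
  have hsum1D : ∑ d ∈ DD m, (∏ i : Fin l, ((Lbad l m t) (.inr i) \ {1, d}).card)
      = (m-2) * ((m-2)^(l-2*t) * (m-1)^(2*t)) := by
    rw [Finset.sum_congr rfl P1d, Finset.sum_const, card_DD, smul_eq_mul]
  have hsumD : ∑ c ∈ DD m, ∑ d ∈ insert 2 (insert 3 (DD m)),
        (∏ i : Fin l, ((Lbad l m t) (.inr i) \ {c, d}).card)
      = (m-2) * ((m-2)^(2*t) * (m-1)^(l-2*t)) + (m-2) * ((m-2)^(l-2*t) * (m-1)^(2*t))
        + ((m-2) * (m-1)^l + ((m-2)*(m-3)) * (m-2)^l) := by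
    have step : ∀ c ∈ DD m, ∑ d ∈ insert 2 (insert 3 (DD m)),
          (∏ i : Fin l, ((Lbad l m t) (.inr i) \ {c, d}).card)
        = ((m-2)^(2*t) * (m-1)^(l-2*t)) + ((m-2)^(l-2*t) * (m-1)^(2*t))
          + ∑ d ∈ DD m, (∏ i : Fin l, ((Lbad l m t) (.inr i) \ {c, d}).card) := by
      intro c hc
      rw [Finset.sum_insert h2B, Finset.sum_insert h3D, Pc2 c hc, Pc3 c hc]
      omega
    rw [Finset.sum_congr rfl step]
    rw [Finset.sum_add_distrib, Finset.sum_add_distrib, Finset.sum_const, Finset.sum_const,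
      card_DD, smul_eq_mul, smul_eq_mul]
    have hdiag : ∑ c ∈ DD m, ∑ d ∈ DD m, (∏ i : Fin l, ((Lbad l m t) (.inr i) \ {c, d}).card)
        = (m-2) * (m-1)^l + ((m-2)*(m-3)) * (m-2)^l := by
      have := diagsum (s := DD m) (W := (m-1)^l) (F := (m-2)^l)
        (fun c d => ∏ i : Fin l, ((Lbad l m t) (.inr i) \ {c, d}).card)
        (fun c hc => by
          show (∏ i : Fin l, ((Lbad l m t) (.inr i) \ {c, c}).card) = (m-1)^l
          rw [Pcd c hc c hc, if_pos rfl])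
        (fun c hc d hd hne => by
          show (∏ i : Fin l, ((Lbad l m t) (.inr i) \ {c, d}).card) = (m-2)^l
          rw [Pcd c hc d hd, if_neg hne])
      rw [this, card_DD]
      have : m - 2 - 1 = m - 3 := by omega
      rw [this]
    rw [hdiag]
  rw [P02, P03, P12, P13, hsum0D, hsum1D, hsumD]
  ring


-- 4 v^t ≤ (v+1)^t when 3v ≤ t, t ≥ 1
lemma four_pow (v t : ℕ) (h : 3*v ≤ t) (ht : 1 ≤ t) : 4*v^t ≤ (v+1)^t := by
  obtain ⟨s, rfl⟩ : ∃ s, t = s + 1 := ⟨t - 1, by omega⟩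
  have h1 := pow_succ_ge v s
  have h2 : 3*v*v^s ≤ (s+1)*v^s := Nat.mul_le_mul_right _ (by omega)
  have h3 : 3*v*v^s = 3*v^(s+1) := by ring
  have h4 : 4*v^(s+1) = v^(s+1) + 3*v^(s+1) := by ring
  omega

-- 2^q * a^(a*q) ≤ (a+1)^(a*q) for a ≥ 1
lemma two_pow_factor (a q : ℕ) (ha : 1 ≤ a) : 2^q * a^(a*q) ≤ (a+1)^(a*q) := by
  have base : 2*a^a ≤ (a+1)^a := by
    obtain ⟨s, rfl⟩ : ∃ s, a = s + 1 := ⟨a - 1, by omega⟩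
    have h1 := pow_succ_ge (s+1) s
    have h2 : (s+1)^(s+1) + (s+1)*(s+1)^s = 2*(s+1)^(s+1) := by
      rw [pow_succ]
      ring
    omega
  calc 2^q * a^(a*q) = (2*a^a)^q := by rw [mul_pow, ← pow_mul]
    _ ≤ ((a+1)^a)^q := Nat.pow_le_pow_left base q
    _ = (a+1)^(a*q) := by rw [← pow_mul]

lemma g64 : ∀ g : ℕ, 1 ≤ g → 64*g ≤ 2^(12*g) := by
  intro g hg
  induction g with
  | zero => omega
  | succ n ih =>
    by_cases hn : n = 0
    · subst hn; norm_num
    · have h1 := ih (by omega)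
      have h2 : 2^(12*(n+1)) = 2^(12*n) * 4096 := by
        rw [show 12*(n+1) = 12*n + 12 by ring, pow_add]
        norm_num
      have h3 : (64:ℕ) ≤ 64*n := by omega
      have h4 : (2:ℕ)^(12*n) ≥ 64*n := h1
      omega

-- regime A (m = 3) part I
lemma regA_I {t r : ℕ} (ht : 4 ≤ t) (hr : r ≤ 3) :
    8*((2^(2*t)*3^(t+r)) + 2*(2^(2*t+r)*3^t) + 2^(2*t)*3^t) ≤ 15*2^(4*t+r) := by
  induction t with
  | zero => omega
  | succ n ih =>
    by_cases hn : n < 4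
    · obtain rfl : n = 3 := by omega
      interval_cases r <;> norm_num
    · have ih' := ih (by omega)
      have e1 : 2^(2*(n+1)) = 4*2^(2*n) := by
        rw [show 2*(n+1) = 2*n + 2 by ring, pow_add]
        ring
      have e2 : (3:ℕ)^((n+1)+r) = 3*3^(n+r) := by
        rw [show (n+1)+r = (n+r)+1 by ring, pow_succ]
        ring
      have e3 : (3:ℕ)^(n+1) = 3*3^n := by rw [pow_succ]; ring
      have e4 : (2:ℕ)^(2*(n+1)+r) = 4*2^(2*n+r) := by
        rw [show 2*(n+1)+r = (2*n+r) + 2 by ring, pow_add]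
        ring
      have e5 : (2:ℕ)^(4*(n+1)+r) = 16*2^(4*n+r) := by
        rw [show 4*(n+1)+r = (4*n+r) + 4 by ring, pow_add]
        ring
      rw [e1, e2, e3, e4, e5]
      calc 8*(4*2^(2*n)*(3*3^(n+r)) + 2*(4*2^(2*n+r)*(3*3^n)) + 4*2^(2*n)*(3*3^n))
          = 12*(8*(2^(2*n)*3^(n+r) + 2*(2^(2*n+r)*3^n) + 2^(2*n)*3^n)) := by ring
        _ ≤ 12*(15*2^(4*n+r)) := Nat.mul_le_mul_left _ ih'
        _ ≤ 15*(16*2^(4*n+r)) := by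
            have e6 : 12*(15*2^(4*n+r)) = 180*2^(4*n+r) := by ring
            have e7 : 15*(16*2^(4*n+r)) = 240*2^(4*n+r) := by ring
            have e8 : 180*2^(4*n+r) ≤ 240*2^(4*n+r) := Nat.mul_le_mul_right _ (by norm_num)
            omega

lemma regA_II {t r : ℕ} (ht : 4 ≤ t) (hr : r ≤ 3) :
    16*2^(2*t+r) + 16*2^(2*t) ≤ 2^(4*t+r) := by
  have h1 : (2:ℕ)^(2*t) ≤ 2^(2*t+r) := Nat.pow_le_pow_right (by omega) (by omega)
  have h2 : (32:ℕ)*2^(2*t+r) = 2^(2*t+r+5) := by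
    rw [pow_add]
    ring
  have h3 : (2:ℕ)^(2*t+r+5) ≤ 2^(4*t+r) := Nat.pow_le_pow_right (by omega) (by omega)
  omega

-- regime B part I
lemma regB_I {g t r : ℕ} (hg : 1 ≤ g) (ht : 3*((g+1)*(g+3)) ≤ t) (hr : r ≤ 3) :
    8*((g+1)^t * (g+2)^(2*t) * (g+3)^(t+r) + 2*((g+1)^t * (g+2)^(2*t+r) * (g+3)^t)
      + (g+1)^(t+r) * (g+2)^(2*t) * (g+3)^t) ≤ 15*(g+2)^(4*t+r) := by
  have ht1 : 1 ≤ t := by nlinarith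
  have hE : 4*((g+1)*(g+3))^t ≤ (((g+1)*(g+3))+1)^t := four_pow _ _ ht ht1
  have hplus : (g+1)*(g+3)+1 = (g+2)*(g+2) := by ring
  have hE' : 4*((g+1)^t*(g+3)^t) ≤ (g+2)^(2*t) := by
    calc 4*((g+1)^t*(g+3)^t) = 4*((g+1)*(g+3))^t := by rw [mul_pow]
      _ ≤ (((g+1)*(g+3))+1)^t := hE
      _ = ((g+2)*(g+2))^t := by rw [hplus]
      _ = (g+2)^(2*t) := by rw [mul_pow, ← pow_add]; congr 1; ring
  have hMb : 4*((g+1)^t * (g+2)^(2*t+r) * (g+3)^t) ≤ (g+2)^(4*t+r) := by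
    calc 4*((g+1)^t * (g+2)^(2*t+r) * (g+3)^t)
        = (4*((g+1)^t*(g+3)^t)) * (g+2)^(2*t+r) := by ring
      _ ≤ (g+2)^(2*t) * (g+2)^(2*t+r) := Nat.mul_le_mul_right _ hE'
      _ = (g+2)^(4*t+r) := by rw [← pow_add]; congr 1; ring
  have hab : ∀ j : ℕ, (g+1)^j ≤ (g+2)^j := fun j => Nat.pow_le_pow_left (by omega) j
  have hMc : 4*((g+1)^(t+r) * (g+2)^(2*t) * (g+3)^t) ≤ (g+2)^(4*t+r) := by
    calc 4*((g+1)^(t+r) * (g+2)^(2*t) * (g+3)^t)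
        = (g+1)^r * ((4*((g+1)^t*(g+3)^t)) * (g+2)^(2*t)) := by
          rw [pow_add]
          ring
      _ ≤ (g+1)^r * ((g+2)^(2*t) * (g+2)^(2*t)) :=
          Nat.mul_le_mul_left _ (Nat.mul_le_mul_right _ hE')
      _ ≤ (g+2)^r * ((g+2)^(2*t) * (g+2)^(2*t)) := Nat.mul_le_mul_right _ (hab r)
      _ = (g+2)^(4*t+r) := by
          rw [← pow_add, ← pow_add, show r + (2*t+2*t) = 4*t+r by omega]
  have h27 : 27*(g+3)^r ≤ 64*(g+2)^r := by
    have h34 : 3*(g+3) ≤ 4*(g+2) := by omega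
    interval_cases r
    · norm_num
    · simp only [pow_one]; omega
    · have := Nat.pow_le_pow_left h34 2
      have e1 : (3*(g+3))^2 = 9*(g+3)^2 := by ring
      have e2 : (4*(g+2))^2 = 16*(g+2)^2 := by ring
      nlinarith [pow_pos (show 0 < g+2 by omega) 2]
    · have := Nat.pow_le_pow_left h34 3
      have e1 : (3*(g+3))^3 = 27*(g+3)^3 := by ring
      have e2 : (4*(g+2))^3 = 64*(g+2)^3 := by ring
      omega
  have hMa : 108*((g+1)^t * (g+2)^(2*t) * (g+3)^(t+r)) ≤ 64*(g+2)^(4*t+r) := by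
    calc 108*((g+1)^t * (g+2)^(2*t) * (g+3)^(t+r))
        = (27*(g+3)^r) * (4*((g+1)^t*(g+3)^t)) * (g+2)^(2*t) := by
          rw [pow_add]
          ring
      _ ≤ (64*(g+2)^r) * ((g+2)^(2*t)) * (g+2)^(2*t) := by
          have := Nat.mul_le_mul h27 hE'
          exact Nat.mul_le_mul_right _ this
      _ = 64*((g+2)^r * ((g+2)^(2*t) * (g+2)^(2*t))) := by ring
      _ = 64*(g+2)^(4*t+r) := by
          rw [← pow_add, ← pow_add, show r + (2*t+2*t) = 4*t+r by omega]
  omega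

-- regime B part II
lemma regB_II {g t r : ℕ} (hg : 1 ≤ g) (hr : r ≤ 3)
    (hq : 32*(g+1) ≤ 2^(2*t/(g+1))) :
    8*(2*((g+1)*((g+1)^(2*t)*(g+2)^(2*t+r))) + 2*((g+1)*((g+1)^(2*t+r)*(g+2)^(2*t))))
      ≤ (g+2)^(4*t+r) := by
  set q := 2*t/(g+1) with hqdef
  have h1 : (g+1)*q ≤ 2*t := by
    rw [hqdef, Nat.mul_comm]
    exact Nat.div_mul_le_self _ _
  have h2 : 2^q * (g+1)^((g+1)*q) ≤ (g+2)^((g+1)*q) := two_pow_factor (g+1) q (by omega)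
  have hab : ∀ j : ℕ, (g+1)^j ≤ (g+2)^j := fun j => Nat.pow_le_pow_left (by omega) j
  have core : 32*((g+1)*(g+1)^(2*t)) ≤ (g+2)^(2*t) := by
    have hsplit1 : (g+1)^(2*t) = (g+1)^((g+1)*q) * (g+1)^(2*t - (g+1)*q) := by
      rw [← pow_add]
      congr 1
      omega
    have hsplit2 : (g+2)^(2*t) = (g+2)^((g+1)*q) * (g+2)^(2*t - (g+1)*q) := by
      rw [← pow_add]
      congr 1
      omega
    calc 32*((g+1)*(g+1)^(2*t)) = (32*(g+1)) * (g+1)^(2*t) := by ring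
      _ ≤ 2^q * (g+1)^(2*t) := Nat.mul_le_mul_right _ hq
      _ = (2^q * (g+1)^((g+1)*q)) * (g+1)^(2*t - (g+1)*q) := by rw [hsplit1]; ring
      _ ≤ (g+2)^((g+1)*q) * (g+1)^(2*t - (g+1)*q) := Nat.mul_le_mul_right _ h2
      _ ≤ (g+2)^((g+1)*q) * (g+2)^(2*t - (g+1)*q) := Nat.mul_le_mul_left _ (hab _)
      _ = (g+2)^(2*t) := hsplit2.symm
  have hX : (g+1)*((g+1)^(2*t+r)*(g+2)^(2*t)) ≤ (g+1)*((g+1)^(2*t)*(g+2)^(2*t+r)) := by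
    apply Nat.mul_le_mul_left
    calc (g+1)^(2*t+r)*(g+2)^(2*t) = (g+1)^r * ((g+1)^(2*t) * (g+2)^(2*t)) := by
          rw [pow_add]; ring
      _ ≤ (g+2)^r * ((g+1)^(2*t) * (g+2)^(2*t)) := Nat.mul_le_mul_right _ (hab r)
      _ = (g+1)^(2*t) * ((g+2)^(2*t) * (g+2)^r) := by ring
      _ = (g+1)^(2*t)*(g+2)^(2*t+r) := by rw [← pow_add]
  have main : 32*((g+1)*((g+1)^(2*t)*(g+2)^(2*t+r))) ≤ (g+2)^(4*t+r) := by
    calc 32*((g+1)*((g+1)^(2*t)*(g+2)^(2*t+r)))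
        = (32*((g+1)*(g+1)^(2*t))) * (g+2)^(2*t+r) := by ring
      _ ≤ (g+2)^(2*t) * (g+2)^(2*t+r) := Nat.mul_le_mul_right _ core
      _ = (g+2)^(4*t+r) := by
          rw [← pow_add]
          congr 1
          omega
  omega

lemma keyltGen {l m t r : ℕ} (hm : 3 ≤ m) (hlr : l = 4*t + r) (hr : r ≤ 3)
    (hI : 8*((m-2)^t * (m-1)^(2*t) * m^(t+r) + 2*((m-2)^t * (m-1)^(2*t+r) * m^t)
        + (m-2)^(t+r) * (m-1)^(2*t) * m^t) ≤ 15*(m-1)^(4*t+r))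
    (hII : 8*(2*((m-2)*((m-2)^(2*t)*(m-1)^(2*t+r))) + 2*((m-2)*((m-2)^(2*t+r)*(m-1)^(2*t))))
        ≤ (m-1)^(4*t+r)) :
    ((m-2) * (m-1)^l + ((m-2)*(m-3)) * (m-2)^l)
      + ((m-2) * ((m-2)^(2*t) * (m-1)^(l-2*t)) + (m-2) * ((m-2)^(l-2*t) * (m-1)^(2*t)))
      + ((m-2) * ((m-2)^(2*t) * (m-1)^(l-2*t)) + (m-2) * ((m-2)^(l-2*t) * (m-1)^(2*t)))
      + ((m-2)^t * (m-1)^(2*t) * m^(l-3*t) + 2*((m-2)^t * (m-1)^(l-2*t) * m^t)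
         + (m-2)^(l-3*t) * (m-1)^(2*t) * m^t)
      < m * (m-1)^l + (m*(m-1)) * (m-2)^l := by
  subst hlr
  rw [show 4*t+r-2*t = 2*t+r by omega, show 4*t+r-3*t = t+r by omega]
  obtain ⟨a, rfl⟩ : ∃ a, m = a+3 := ⟨m-3, by omega⟩
  simp only [show a+3-2 = a+1 from by omega, show a+3-1 = a+2 from by omega,
    show a+3-3 = a from by omega] at hI hII ⊢
  have e1 : (a+3)*(a+2)^(4*t+r) = (a+1)*(a+2)^(4*t+r) + 2*(a+2)^(4*t+r) := by ring
  have e2 : ((a+1)*a + 6) * ((a+1)^(4*t+r)) ≤ ((a+3)*(a+2))*(a+1)^(4*t+r) :=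
    Nat.mul_le_mul_right _ (by nlinarith)
  have e2b : ((a+1)*a + 6)*((a+1)^(4*t+r)) = ((a+1)*a)*((a+1)^(4*t+r)) + 6*(a+1)^(4*t+r) := by
    ring
  have hF : 1 ≤ (a+1)^(4*t+r) := Nat.one_le_pow _ _ (by omega)
  omega

lemma hIandII {l : ℕ} (hl : 16 ≤ l) :
    (8*(((3 + Nat.sqrt l / 12)-2)^(l/4) * ((3 + Nat.sqrt l / 12)-1)^(2*(l/4))
          * (3 + Nat.sqrt l / 12)^((l/4)+(l%4))
        + 2*(((3 + Nat.sqrt l / 12)-2)^(l/4) * ((3 + Nat.sqrt l / 12)-1)^(2*(l/4)+(l%4))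
          * (3 + Nat.sqrt l / 12)^(l/4))
        + ((3 + Nat.sqrt l / 12)-2)^((l/4)+(l%4)) * ((3 + Nat.sqrt l / 12)-1)^(2*(l/4))
          * (3 + Nat.sqrt l / 12)^(l/4))
      ≤ 15*((3 + Nat.sqrt l / 12)-1)^(4*(l/4)+(l%4)))
    ∧ (8*(2*(((3 + Nat.sqrt l / 12)-2)*(((3 + Nat.sqrt l / 12)-2)^(2*(l/4))
          * ((3 + Nat.sqrt l / 12)-1)^(2*(l/4)+(l%4))))
        + 2*(((3 + Nat.sqrt l / 12)-2)*(((3 + Nat.sqrt l / 12)-2)^(2*(l/4)+(l%4))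
          * ((3 + Nat.sqrt l / 12)-1)^(2*(l/4)))))
      ≤ ((3 + Nat.sqrt l / 12)-1)^(4*(l/4)+(l%4))) := by
  set sn := Nat.sqrt l with hsn
  set g := sn / 12 with hgdef
  set t := l / 4 with htdef
  set r := l % 4 with hrdef
  have hr : r ≤ 3 := by omega
  have ht4 : 4 ≤ t := by omega
  by_cases hg : g = 0
  · -- regime A : m = 3
    rw [hg]
    simp only [show 3 + 0 - 2 = 1 from rfl, show 3 + 0 - 1 = 2 from rfl, Nat.add_zero]
    constructor
    · have := regA_I (t := t) (r := r) ht4 hr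
      calc 8*(1^t * 2^(2*t) * 3^(t+r) + 2*(1^t * 2^(2*t+r) * 3^t) + 1^(t+r) * 2^(2*t) * 3^t)
          = 8*((2^(2*t)*3^(t+r)) + 2*(2^(2*t+r)*3^t) + 2^(2*t)*3^t) := by
            simp [one_pow]
        _ ≤ 15*2^(4*t+r) := this
    · have := regA_II (t := t) (r := r) ht4 hr
      calc 8*(2*(1*(1^(2*t) * 2^(2*t+r))) + 2*(1*(1^(2*t+r) * 2^(2*t))))
          = 16*2^(2*t+r) + 16*2^(2*t) := by simp [one_pow]; ring
        _ ≤ 2^(4*t+r) := this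
  · -- regime B : m = g + 3, g ≥ 1
    have hg1 : 1 ≤ g := by omega
    have hsn12 : 12*g ≤ sn ∧ sn < 12*g + 12 := by omega
    have hsnl : sn*sn ≤ l := by rw [hsn, ← pow_two]; exact Nat.sqrt_le' l
    have hgg : g ≤ g*g := Nat.le_mul_of_pos_left g (by omega)
    have h144 : 144*(g*g) ≤ l := by
      calc 144*(g*g) = (12*g)*(12*g) := by ring
        _ ≤ sn*sn := Nat.mul_le_mul hsn12.1 hsn12.1
        _ ≤ l := hsnl
    have ht : 3*((g+1)*(g+3)) ≤ t := by
      have e : (g+1)*(g+3) = g*g + 4*g + 3 := by ring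
      omega
    have hq : 32*(g+1) ≤ 2^(2*t/(g+1)) := by
      have h6 : 6*(g+1) ≤ sn := by omega
      have hmul : (6*(g+1))*sn ≤ sn*sn := Nat.mul_le_mul_right sn h6
      have e : (6*(g+1))*sn = 6*((g+1)*sn) := by ring
      have hqt : (g+1)*sn ≤ 2*t := by omega
      have hsnq : sn ≤ 2*t/(g+1) := by
        rw [Nat.le_div_iff_mul_le (by omega : 0 < g+1)]
        calc sn*(g+1) = (g+1)*sn := by ring
          _ ≤ 2*t := hqt
      calc 32*(g+1) ≤ 64*g := by omega
        _ ≤ 2^(12*g) := g64 g hg1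
        _ ≤ 2^sn := Nat.pow_le_pow_right (by omega) hsn12.1
        _ ≤ 2^(2*t/(g+1)) := Nat.pow_le_pow_right (by omega) hsnq
    have hmval : 3 + g = g + 3 := by ring
    rw [show 3 + g - 2 = g+1 from by omega, show 3 + g - 1 = g+2 from by omega]
    constructor
    · have := regB_I (g := g) (t := t) (r := r) hg1 ht hr
      calc 8*((g+1)^t * (g+2)^(2*t) * (3+g)^(t+r) + 2*((g+1)^t * (g+2)^(2*t+r) * (3+g)^t)
            + (g+1)^(t+r) * (g+2)^(2*t) * (3+g)^t)
          = 8*((g+1)^t * (g+2)^(2*t) * (g+3)^(t+r) + 2*((g+1)^t * (g+2)^(2*t+r) * (g+3)^t)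
            + (g+1)^(t+r) * (g+2)^(2*t) * (g+3)^t) := by rw [hmval]
        _ ≤ 15*(g+2)^(4*t+r) := this
    · exact regB_II hg1 hr hq


lemma badlt {l : ℕ} (hl : 16 ≤ l) :
    NL l (Lbad l (3 + Nat.sqrt l / 12) (l/4)) < chromPoly (K2l l) (3 + Nat.sqrt l / 12) := by
  rw [NL_Lbad (by omega) (by omega), chromPoly_K2l]
  obtain ⟨hI, hII⟩ := hIandII hl
  exact keyltGen (by omega) (by omega) (by omega) hI hII

lemma chromNum_le2 {l : ℕ} (hl : 1 ≤ l) : chromNum (K2l l) ≤ 2 := by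
  apply Nat.sInf_le
  show 0 < chromPoly (K2l l) 2
  rw [chromPoly_K2l]
  rw [show (2-2 : ℕ) = 0 from rfl, zero_pow (by omega : l ≠ 0)]
  norm_num

lemma lcf_eq {l m : ℕ} (hl : 2 ≤ l) (hm : 3*l+2 ≤ m) :
    listColorFunction (K2l l) m = chromPoly (K2l l) m := by
  have hconst : IsAssignment (fun _ : Fin 2 ⊕ Fin l => Finset.Icc 1 m) m := by
    intro v
    rw [Nat.card_Icc]
    omega
  apply le_antisymm
  · exact Nat.sInf_le ⟨fun _ => Finset.Icc 1 m, hconst, rfl⟩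
  · have hne : {p | ∃ L : Fin 2 ⊕ Fin l → Finset ℕ,
        IsAssignment L m ∧ numListColorings (K2l l) L = p}.Nonempty :=
      ⟨_, fun _ => Finset.Icc 1 m, hconst, rfl⟩
    obtain ⟨L, hL, hEq⟩ := Nat.sInf_mem hne
    rw [listColorFunction, ← hEq, CL, chromPoly_K2l]
    exact UD hl hm L hL

lemma tau_ge {l : ℕ} (hl : 16 ≤ l) :
    3 + Nat.sqrt l / 12 + 1 ≤ lcfThreshold (K2l l) := by
  have hSne : (3*l+2) ∈ {k | chromNum (K2l l) ≤ k ∧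
      ∀ m, k ≤ m → listColorFunction (K2l l) m = chromPoly (K2l l) m} :=
    ⟨le_trans (chromNum_le2 (by omega)) (by omega), fun m hm => lcf_eq (by omega) hm⟩
  have hmem := Nat.sInf_mem (⟨_, hSne⟩ : Set.Nonempty _)
  rw [lcfThreshold]
  by_contra hcon
  push_neg at hcon
  have h2 := hmem.2 (3 + Nat.sqrt l / 12) (by omega)
  have hle : listColorFunction (K2l l) (3 + Nat.sqrt l / 12)
      ≤ NL l (Lbad l (3 + Nat.sqrt l / 12) (l/4)) :=
    Nat.sInf_le ⟨Lbad l (3 + Nat.sqrt l / 12) (l/4), isAssignment_Lbad (by omega), CL _⟩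
  have := badlt hl
  omega

theorem main :
    ∃ C : ℝ, 0 < C ∧ ∀ l : ℕ, 16 ≤ l →
      listChromNum (K2l l) = 3 ∧
      (lcfThreshold (K2l l) : ℝ) - 3 ≥ C * Real.sqrt l := by
  refine ⟨1/12, by norm_num, fun l hl => ⟨listChromNum_K2l hl, ?_⟩⟩
  have htau := tau_ge hl
  set sn := Nat.sqrt l with hsn
  have h12 : sn + 1 ≤ 12*(sn/12 + 1) := by omega
  have hsq : Real.sqrt l ≤ ((sn:ℝ) + 1) := by
    rw [show ((sn:ℝ)+1) = (((sn+1 : ℕ)):ℝ) by push_cast; ring]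
    rw [← Real.sqrt_sq (by positivity : (0:ℝ) ≤ (((sn+1:ℕ)):ℝ))]
    apply Real.sqrt_le_sqrt
    have h : l < (Nat.sqrt l + 1)^2 := Nat.lt_succ_sqrt' l
    have h2 : l ≤ (sn+1)*(sn+1) := by
      rw [hsn]
      nlinarith [h, sq_nonneg (Nat.sqrt l + 1)]
    have : (l:ℝ) ≤ ((sn+1:ℕ):ℝ) * ((sn+1:ℕ):ℝ) := by exact_mod_cast h2
    nlinarith
  have hc1 : ((3 + sn / 12 + 1 : ℕ) : ℝ) ≤ (lcfThreshold (K2l l) : ℝ) := Nat.cast_le.2 htau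
  have hc2 : ((sn:ℝ) + 1) ≤ 12*((sn/12 : ℕ) + 1 : ℝ) := by
    have : ((sn + 1 : ℕ):ℝ) ≤ ((12*(sn/12 + 1) : ℕ):ℝ) := Nat.cast_le.2 h12
    push_cast at this
    linarith
  push_cast at hc1
  rw [ge_iff_le]
  calc (1/12) * Real.sqrt l ≤ (1/12) * ((sn:ℝ)+1) := by linarith [Real.sqrt_nonneg (l:ℝ)]
    _ ≤ ((sn/12 : ℕ) : ℝ) + 1 := by linarith
    _ ≤ (lcfThreshold (K2l l) : ℝ) - 3 := by linarith


/-- There is a constant `C > 0` such that for every `l ≥ 16`,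
`τ(K_{2,l}) - χ_ℓ(K_{2,l}) = τ(K_{2,l}) - 3 ≥ C·√l`. -/
theorem exists_const_lcfThreshold_sub_listChromNum_ge :
    ∃ C : ℝ, 0 < C ∧ ∀ l : ℕ, 16 ≤ l →
      listChromNum (K2l l) = 3 ∧
      (lcfThreshold (K2l l) : ℝ) - 3 ≥ C * Real.sqrt l := by
  refine ⟨1/12, by norm_num, fun l hl => ⟨listChromNum_K2l hl, ?_⟩⟩
  have htau := tau_ge hl
  set sn := Nat.sqrt l with hsn
  have h12 : sn + 1 ≤ 12*(sn/12 + 1) := by omega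
  have hsq : Real.sqrt l ≤ ((sn:ℝ) + 1) := by
    rw [show ((sn:ℝ)+1) = (((sn+1 : ℕ)):ℝ) by push_cast; ring]
    rw [← Real.sqrt_sq (by positivity : (0:ℝ) ≤ (((sn+1:ℕ)):ℝ))]
    apply Real.sqrt_le_sqrt
    have h : l < (Nat.sqrt l + 1)^2 := Nat.lt_succ_sqrt' l
    have h2 : l ≤ (sn+1)*(sn+1) := by
      rw [hsn]
      nlinarith [h, sq_nonneg (Nat.sqrt l + 1)]
    have : (l:ℝ) ≤ ((sn+1:ℕ):ℝ) * ((sn+1:ℕ):ℝ) := by exact_mod_cast h2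
    nlinarith
  have hc1 : ((3 + sn / 12 + 1 : ℕ) : ℝ) ≤ (lcfThreshold (K2l l) : ℝ) := Nat.cast_le.2 htau
  have hc2 : ((sn:ℝ) + 1) ≤ 12*((sn/12 : ℕ) + 1 : ℝ) := by
    have : ((sn + 1 : ℕ):ℝ) ≤ ((12*(sn/12 + 1) : ℕ):ℝ) := Nat.cast_le.2 h12
    push_cast at this
    linarith
  push_cast at hc1
  rw [ge_iff_le]
  calc (1/12) * Real.sqrt l ≤ (1/12) * ((sn:ℝ)+1) := by linarith [Real.sqrt_nonneg (l:ℝ)]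
    _ ≤ ((sn/12 : ℕ) : ℝ) + 1 := by linarith
    _ ≤ (lcfThreshold (K2l l) : ℝ) - 3 := by linarith
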